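/- arXiv:1709.04274 — 3 statements merged into one kernel-verified Lean document; each statement's English description precedes it below -/
import Mathlib

section
/- Let a, b ∈ ℝ with |a| + |b| < 1 and let τ, δ > 0. Then every complex root s of the characteristic equation 1 − a·e^{−τs} − b·e^{−(τ+δ)s} = 0 satisfies Re(s) < 0. -/
theorem Complex.norm_exp_neg_ofReal_mul_le_one {t : ℝ} (ht : 0 ≤ t) {s : ℂ} (hs : 0 ≤ s.re) :
    ‖Complex.exp (-(t : ℂ) * s)‖ ≤ 1 := by
  rw [Complex.norm_exp, Real.exp_le_one_iff, neg_mul, Complex.neg_re, Complex.re_ofReal_mul,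
    neg_nonpos]
  exact mul_nonneg ht hs

theorem one_sub_mul_sub_mul_ne_zero {R : Type*} [SeminormedRing R] [NormOneClass R] {a b x y : R}
    (hab : ‖a‖ + ‖b‖ < 1) (hx : ‖x‖ ≤ 1) (hy : ‖y‖ ≤ 1) : 1 - a * x - b * y ≠ 0 := by
  intro h
  rw [sub_sub, sub_eq_zero] at h
  have : ‖a * x + b * y‖ < 1 :=
    calc ‖a * x + b * y‖ ≤ ‖a‖ * ‖x‖ + ‖b‖ * ‖y‖ :=
          norm_add_le_of_le (norm_mul_le _ _) (norm_mul_le _ _)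
      _ ≤ ‖a‖ + ‖b‖ :=
          add_le_add (mul_le_of_le_one_right (norm_nonneg a) hx)
            (mul_le_of_le_one_right (norm_nonneg b) hy)
      _ < 1 := hab
  simp [← h] at this

theorem neutral_delay_robust_stable (a b τ δ : ℝ) (hab : |a| + |b| < 1) (hτ : τ > 0)
    (hδ : δ > 0) (s : ℂ)
    (hs : 1 - (a : ℂ) * Complex.exp (-(τ : ℂ) * s) - (b : ℂ) * Complex.exp (-((τ : ℂ) + δ) * s) = 0) :
    s.re < 0 := by
  by_contra! hre
  have hτs := Complex.norm_exp_neg_ofReal_mul_le_one hτ.le hre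
  have hτδs : ‖Complex.exp (-((τ : ℂ) + δ) * s)‖ ≤ 1 := by
    exact_mod_cast Complex.norm_exp_neg_ofReal_mul_le_one (t := τ + δ) (by linarith) hre
  refine one_sub_mul_sub_mul_ne_zero ?_ hτs hτδs hs
  simpa only [Complex.norm_real, Real.norm_eq_abs] using hab
end

section
/- Let τ > 0, let N ∈ L¹([0,τ], ℝ), and let ε₀ > 0. Then there exists δ₀ > 0 such that for all δ with 0 < δ ≤ δ₀ and all s ∈ ℂ with Re(s) ≥ 0, one has |∫₀^τ N(ξ)·(e^{−ξs} − e^{−(ξ+δ)s}) dξ| < ε₀. -/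
/-!
Extend `N` by zero to `f ∈ L¹(ℝ)` and cut the kernel `ξ ↦ e^{-ξs}` off to a kernel `k` supported
on `[0, ∞)`, where it is bounded by `1` for `Re s ≥ 0`; this does not change the integral.
Translating the first half of the integral by `δ` turns it into `∫ (f(ξ + δ) - f(ξ)) k(ξ + δ) dξ`,
so it is bounded by `‖f(· + δ) - f‖₁` uniformly in `s`, and this tends to `0` with `δ` by
continuity of translation in `L¹`.
-/

open MeasureTheory Filter Topology

theorem tendsto_integral_norm_comp_add_sub {G E : Type*} [AddGroup G] [TopologicalSpace G]
    [IsTopologicalAddGroup G] [MeasurableSpace G] [BorelSpace G] [NormedAddCommGroup E]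
    {μ : Measure G} [IsLocallyFiniteMeasure μ] [μ.InnerRegularCompactLTTop] [μ.IsAddLeftInvariant]
    {f : G → E} (hf : Integrable f μ) :
    Tendsto (fun t ↦ ∫ x, ‖f (t + x) - f x‖ ∂μ) (𝓝 0) (𝓝 0) := by
  have : Fact ((1 : ENNReal) ≠ ⊤) := ⟨ENNReal.one_ne_top⟩
  set F := hf.toL1 f
  have hF : ∀ t, (fun x ↦ F (t + x)) =ᵐ[μ] fun x ↦ f (t + x) := fun t ↦
    (measurePreserving_add_left μ t).quasiMeasurePreserving.ae_eq_comp hf.coeFn_toL1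
  have hnorm : ∀ t, ‖(DomAddAct.mk t +ᵥ F) - F‖ = ∫ x, ‖f (t + x) - f x‖ ∂μ := by
    intro t
    rw [L1.norm_eq_integral_norm]
    refine integral_congr_ae ?_
    filter_upwards [Lp.coeFn_sub (DomAddAct.mk t +ᵥ F) F, DomAddAct.vadd_Lp_ae_eq (DomAddAct.mk t) F,
      hF t, hf.coeFn_toL1] with x h₁ h₂ h₃ h₄
    rw [h₁, Pi.sub_apply, h₂, h₄]
    simpa using congrArg (‖· - f x‖) h₃
  have hcont : Continuous fun t : G ↦ ‖(DomAddAct.mk t +ᵥ F) - F‖ := by fun_prop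
  simpa [hnorm] using hcont.tendsto 0

theorem norm_integral_mul_sub_comp_add_le {G 𝕜 : Type*} [AddGroup G] [MeasurableSpace G]
    [MeasurableAdd G] {μ : Measure G} [μ.IsAddRightInvariant] [NormedRing 𝕜] [NormedSpace ℝ 𝕜]
    {f k : G → 𝕜} (hf : Integrable f μ) (hk : AEStronglyMeasurable k μ) {C : ℝ}
    (hC : ∀ x, ‖k x‖ ≤ C) (t : G) :
    ‖∫ x, f x * (k x - k (x + t)) ∂μ‖ ≤ C * ∫ x, ‖f (x + t) - f x‖ ∂μ := by
  have htrans := measurePreserving_add_right μ t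
  have hft : Integrable (fun x ↦ f (x + t)) μ := htrans.integrable_comp_of_integrable hf
  have hkt : AEStronglyMeasurable (fun x ↦ k (x + t)) μ := hk.comp_measurePreserving htrans
  have hbdd : ∀ᵐ x ∂μ, ‖k (x + t)‖ ≤ C := .of_forall fun x ↦ hC _
  have hshift : ∫ x, f x * (k x - k (x + t)) ∂μ = ∫ x, (f (x + t) - f x) * k (x + t) ∂μ := by
    simp only [mul_sub, sub_mul]
    have hfk : Integrable (fun x ↦ f x * k (x + t)) μ := hf.mul_bdd hkt hbdd
    rw [integral_sub (hf.mul_bdd hk (.of_forall hC)) hfk, integral_sub (hft.mul_bdd hkt hbdd) hfk,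
      integral_add_right_eq_self (fun x ↦ f x * k x)]
  rw [hshift, ← integral_const_mul]
  refine norm_integral_le_of_norm_le ((hft.sub hf).norm.const_mul C) (.of_forall fun x ↦ ?_)
  calc ‖(f (x + t) - f x) * k (x + t)‖ ≤ ‖f (x + t) - f x‖ * ‖k (x + t)‖ := norm_mul_le _ _
    _ ≤ ‖f (x + t) - f x‖ * C := by gcongr; exact hC _
    _ = C * ‖f (x + t) - f x‖ := mul_comm _ _

noncomputable def expKernel (s : ℂ) : ℝ → ℂ :=
  (Set.Ici 0).indicator fun x ↦ Complex.exp (-(x : ℂ) * s)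

theorem expKernel_of_nonneg (s : ℂ) {x : ℝ} (hx : 0 ≤ x) :
    expKernel s x = Complex.exp (-(x : ℂ) * s) :=
  Set.indicator_of_mem hx _

theorem norm_expKernel_le_one {s : ℂ} (hs : 0 ≤ s.re) (x : ℝ) : ‖expKernel s x‖ ≤ 1 := by
  by_cases hx : 0 ≤ x
  · rw [expKernel_of_nonneg s hx, Complex.norm_exp, Real.exp_le_one_iff]
    simpa using mul_nonneg hx hs
  · simp [expKernel, hx]

theorem aestronglyMeasurable_expKernel (s : ℂ) : AEStronglyMeasurable (expKernel s) :=
  (Continuous.aestronglyMeasurable (by fun_prop)).indicator measurableSet_Ici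

theorem setIntegral_Icc_mul_cexp_sub_eq_integral_expKernel (N : ℝ → ℂ) (s : ℂ) {δ : ℝ}
    (hδ : 0 ≤ δ) (τ : ℝ) :
    ∫ ξ in Set.Icc 0 τ, N ξ * (Complex.exp (-(ξ : ℂ) * s) - Complex.exp (-((ξ : ℂ) + δ) * s)) =
      ∫ ξ, (Set.Icc 0 τ).indicator N ξ * (expKernel s ξ - expKernel s (ξ + δ)) := by
  rw [← integral_indicator measurableSet_Icc]
  congr 1 with ξ
  by_cases hξ : ξ ∈ Set.Icc 0 τ
  · rw [Set.indicator_of_mem hξ, Set.indicator_of_mem hξ, expKernel_of_nonneg s hξ.1,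
      expKernel_of_nonneg s (by linarith [hξ.1]), Complex.ofReal_add]
  · simp [hξ]

theorem perturbation_uniform_small_general (τ : ℝ) (N : ℝ → ℝ)
    (hN : IntegrableOn N (Set.Icc 0 τ)) (ε₀ : ℝ) (hε₀ : ε₀ > 0) :
    ∃ δ₀ > 0, ∀ δ : ℝ, 0 < δ → δ ≤ δ₀ → ∀ s : ℂ, 0 ≤ s.re →
      ‖∫ ξ in Set.Icc (0:ℝ) τ,
        (N ξ : ℂ) * (Complex.exp (-(ξ : ℂ) * s) - Complex.exp (-((ξ : ℂ) + δ) * s))‖ < ε₀ := by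
  set f : ℝ → ℂ := (Set.Icc 0 τ).indicator fun ξ ↦ (N ξ : ℂ)
  have hf : Integrable f := (integrable_indicator_iff measurableSet_Icc).2 hN.ofReal
  obtain ⟨δ₀, hδ₀, hsmall⟩ := Metric.eventually_nhds_iff.1 <|
    (tendsto_integral_norm_comp_add_sub hf).eventually (gt_mem_nhds hε₀)
  refine ⟨δ₀ / 2, by positivity, fun δ hδ hδle s hs ↦ ?_⟩
  calc _ = ‖∫ ξ, f ξ * (expKernel s ξ - expKernel s (ξ + δ))‖ := by
        rw [setIntegral_Icc_mul_cexp_sub_eq_integral_expKernel _ s hδ.le]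
    _ ≤ 1 * ∫ x, ‖f (x + δ) - f x‖ :=
        norm_integral_mul_sub_comp_add_le hf (aestronglyMeasurable_expKernel s)
          (norm_expKernel_le_one hs) δ
    _ < ε₀ := by
      simp_rw [one_mul, add_comm _ δ]
      exact hsmall (by rw [Real.dist_eq, sub_zero, abs_of_pos hδ]; linarith)

theorem perturbation_uniform_small (τ : ℝ) (hτ : τ > 0) (N : ℝ → ℝ)
    (hN : IntegrableOn N (Set.Icc 0 τ)) (ε₀ : ℝ) (hε₀ : ε₀ > 0) :
    ∃ δ₀ > 0, ∀ δ : ℝ, 0 < δ → δ ≤ δ₀ → ∀ s : ℂ, 0 ≤ s.re →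
      ‖∫ ξ in Set.Icc (0:ℝ) τ,
        (N ξ : ℂ) * (Complex.exp (-(ξ : ℂ) * s) - Complex.exp (-((ξ : ℂ) + δ) * s))‖ < ε₀ :=
  perturbation_uniform_small_general τ N hN ε₀ hε₀
end

section
/- Let F: ℂ → ℂ be defined by F(s) = 1 − Σ_{k=0}^m a_k·e^{−τ_k s} with a_k ∈ ℂ and τ_k > 0, and let H: ℂ → ℂ be holomorphic on a neighborhood of the closed right half-plane with |H(s)| → 0 as |s| → ∞. Suppose there exists σ > 0 such that F has infinitely many zeros in the half-plane {Re(s) > σ}, and suppose there exist η > 0 and κ > 0 such that every connected component of the η-neighborhood of the zero set of F meeting {Re(s) > σ} is bounded, contained in {Re(s) > σ/2}, and |F| ≥ κ outside this neighborhood in {Re(s) > σ/2}. Then F + H has infinitely many zeros with strictly positive real part. -/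
/-!
Suppose `F + H` had only finitely many zeros in the right half-plane. They, together with the
points where `‖H‖ > κ / 3`, lie in some ball `B`. The zeros of the entire function `F ≠ 0` are
isolated, so only finitely many components of the `η`-neighbourhood `𝒩` of the zero set meet `B`;
these components are bounded, so some zero with `re > σ` has its component `V` disjoint from `B`.
On the frontier of `V` we have `‖F‖ ≥ κ`: off the line `re = σ / 2` the frontier avoids `𝒩`, and at
a point of that line with `‖F‖ < κ` a whole vertical segment would lie in `closure V`, whose
`η`-translate would consist of zeros of `F`. Then `‖H‖ ≤ ‖F + H‖ / 2` on the frontier, while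
`H / (F + H) = 1` at a zero of `F`, contradicting the maximum modulus principle, unless `F + H`
vanishes on `closure V ⊆ {re ≥ σ / 2} \ B`.
-/

open Complex Metric Set Filter Topology Bornology

theorem tendsto_one_sub_sum_exp_atTop {ι : Type*} [Fintype ι] (a : ι → ℂ) (τ : ι → ℝ)
    (hτ : ∀ k, 0 < τ k) :
    Tendsto (fun t : ℝ => 1 - ∑ k, a k * exp (-(τ k : ℂ) * t)) atTop (𝓝 1) := by
  have hterm (k : ι) : Tendsto (fun t : ℝ => a k * exp (-(τ k : ℂ) * t)) atTop (𝓝 0) := by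
    have hre : Tendsto (fun t : ℝ => -(τ k : ℂ) * t) atTop (comap re atBot) := by
      refine tendsto_comap_iff.2 ?_
      simpa [Function.comp_def] using
        tendsto_neg_atTop_atBot.comp (tendsto_id.const_mul_atTop (hτ k))
    simpa using (tendsto_exp_comap_re_atBot.comp hre).const_mul (a k)
  simpa using tendsto_const_nhds.sub (tendsto_finsetSum Finset.univ fun k _ => hterm k)

theorem Differentiable.finite_inter_preimage_zero {F : ℂ → ℂ} (hF : Differentiable ℂ F)
    (hne : ∃ z, F z ≠ 0) {K : Set ℂ} (hK : IsCompact K) : (K ∩ F ⁻¹' {0}).Finite := by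
  obtain ⟨z, hz⟩ := hne
  have hcod : ∀ᶠ x in codiscreteWithin univ, F x ≠ 0 :=
    (hF.differentiableOn.analyticOnNhd isOpen_univ).eqOn_zero_or_eventually_ne_zero_of_preconnected
      isPreconnected_univ |>.resolve_left fun h => hz (h (mem_univ z))
  simpa [sdiff_eq, compl_ofPred, preimage] using
    hK.finite_sdiff_of_mem_codiscreteWithin (codiscreteWithin_mono (subset_univ K) hcod)

theorem IsOpen.notMem_of_mem_frontier_connectedComponentIn {α : Type*} [TopologicalSpace α]
    [LocallyConnectedSpace α] {U : Set α} (hU : IsOpen U) {x z : α}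
    (hz : z ∈ frontier (connectedComponentIn U x)) : z ∉ U := by
  intro hzU
  rw [hU.connectedComponentIn.frontier_eq] at hz
  obtain ⟨p, hpz, hpx⟩ := mem_closure_iff.1 hz.1 _ hU.connectedComponentIn
    (mem_connectedComponentIn hzU)
  have hxz : connectedComponentIn U x = connectedComponentIn U z :=
    (connectedComponentIn_eq hpx).trans (connectedComponentIn_eq hpz).symm
  exact hz.2 (hxz ▸ mem_connectedComponentIn hzU)

section Thickening

variable {E : Type*} [NormedAddCommGroup E] [NormedSpace ℝ E] {Z : Set E} {η : ℝ}

theorem ball_subset_connectedComponentIn_thickening {w x : E} (hw : w ∈ Z) (hx : dist x w < η) :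
    ball w η ⊆ connectedComponentIn (thickening η Z) x :=
  (convex_ball w η).isPreconnected.subset_connectedComponentIn (mem_ball.2 hx)
    (ball_subset_thickening hw η)

theorem exists_ball_subset_connectedComponentIn_thickening {x y : E}
    (hy : y ∈ connectedComponentIn (thickening η Z) x) :
    ∃ w ∈ Z, dist y w < η ∧ ball w η ⊆ connectedComponentIn (thickening η Z) x := by
  obtain ⟨w, hw, hyw⟩ := mem_thickening_iff.1 (connectedComponentIn_subset _ _ hy)
  exact ⟨w, hw, hyw,
    connectedComponentIn_eq hy ▸ ball_subset_connectedComponentIn_thickening hw hyw⟩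

/-- If `Z` is locally finite, only finitely many components of its `η`-thickening meet a bounded
set, since each of them contains the `η`-ball around a point of `Z` near that set. -/
theorem isBounded_of_connectedComponentIn_thickening_inter_nonempty [ProperSpace E]
    (hZ : ∀ K, IsCompact K → (K ∩ Z).Finite) {W K : Set E} (hK : IsBounded K)
    (hW : ∀ z ∈ W, z ∈ thickening η Z ∧ IsBounded (connectedComponentIn (thickening η Z) z) ∧
      (connectedComponentIn (thickening η Z) z ∩ K).Nonempty) :
    IsBounded W := by
  set T := {w ∈ closure (thickening η K) ∩ Z | IsBounded (connectedComponentIn (thickening η Z) w)}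
  have hT : T.Finite := (hZ _ hK.thickening.isCompact_closure).subset fun w hw => hw.1
  refine ((isBounded_biUnion hT).2 fun w hw => hw.2).subset fun z hz => ?_
  obtain ⟨hzZ, hbdd, p, hpz, hpK⟩ := hW z hz
  obtain ⟨w, hw, hpw, hball⟩ := exists_ball_subset_connectedComponentIn_thickening hpz
  have hwz : connectedComponentIn (thickening η Z) z = connectedComponentIn (thickening η Z) w :=
    connectedComponentIn_eq (hball (mem_ball_self ((dist_nonneg).trans_lt hpw)))
  have hwK : w ∈ closure (thickening η K) :=
    subset_closure (mem_thickening_iff.2 ⟨p, hpK, by rwa [dist_comm]⟩)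
  exact mem_biUnion ⟨⟨hwK, hw⟩, hwz ▸ hbdd⟩ (hwz ▸ mem_connectedComponentIn hzZ)

end Thickening

namespace Complex

theorem add_le_re_of_ball_subset {w : ℂ} {r c : ℝ} (hr : 0 < r)
    (h : ball w r ⊆ {s | c < s.re}) : c + r ≤ w.re := by
  by_contra! hlt
  have hc : c < w.re := h (mem_ball_self hr)
  have hmem : w - (w.re - c : ℝ) ∈ ball w r := by
    rw [mem_ball, dist_eq_norm, sub_sub_cancel_left, norm_neg, norm_real, Real.norm_eq_abs,
      abs_of_pos (sub_pos.2 hc)]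
    linarith
  simpa using h hmem

theorem eq_add_of_add_le_re_of_dist_le {y w : ℂ} {r : ℝ} (hre : y.re + r ≤ w.re)
    (hd : dist y w ≤ r) : w = y + r := by
  rw [dist_comm, dist_eq_norm] at hd
  have hre' : (w - y).re = r := le_antisymm ((re_le_norm _).trans hd) (by rw [sub_re]; linarith)
  have him : (w - y).im = 0 := by
    have hsq := Complex.sq_norm (w - y)
    rw [normSq_apply, hre'] at hsq
    nlinarith [norm_nonneg (w - y)]
  exact eq_add_of_sub_eq' (Complex.ext (by simpa using hre') (by simpa using him))

theorem infinite_ball_inter_re_eq (z : ℂ) {δ : ℝ} (hδ : 0 < δ) :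
    (ball z δ ∩ {y | y.re = z.re}).Infinite := by
  have hinj : InjOn (fun t : ℝ => z + t * I) (Ioo (-δ) δ) := fun s _ t _ hst => by
    simpa using congrArg im hst
  refine ((Ioo_infinite (by linarith)).image hinj).mono ?_
  rintro _ ⟨t, ht, rfl⟩
  refine ⟨?_, by simp⟩
  rw [mem_ball, dist_eq_norm, add_sub_cancel_left, norm_mul, norm_I, mul_one, norm_real,
    Real.norm_eq_abs, abs_lt]
  exact ht

end Complex

/-- Points of the component lie within `η` of zeros `w` with `ball w η` inside the component, hence
with `c + η ≤ w.re`; a point `y` of the closure on the line `re = c` is within `η` of such a `w`,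
which forces `w = y + η`. -/
theorem add_mem_of_mem_closure_connectedComponentIn_thickening {Z : Set ℂ} {η c : ℝ} {x y : ℂ}
    (hZ : IsClosed Z) (hη : 0 < η)
    (hV : connectedComponentIn (thickening η Z) x ⊆ {s | c < s.re})
    (hy : y ∈ closure (connectedComponentIn (thickening η Z) x)) (hyc : y.re = c) :
    y + η ∈ Z := by
  set S := Z ∩ {s | c + η ≤ s.re}
  have hVS : connectedComponentIn (thickening η Z) x ⊆ thickening η S := fun q hq => by
    obtain ⟨w, hw, hqw, hball⟩ := exists_ball_subset_connectedComponentIn_thickening hq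
    exact mem_thickening_iff.2
      ⟨w, ⟨hw, Complex.add_le_re_of_ball_subset hη (hball.trans hV)⟩, hqw⟩
  have hSc : IsClosed S := hZ.inter (isClosed_le continuous_const continuous_re)
  have hyS := closure_thickening_subset_cthickening η S (closure_mono hVS hy)
  rw [hSc.cthickening_eq_biUnion_closedBall hη.le, mem_iUnion₂] at hyS
  obtain ⟨w, ⟨hwZ, hwre⟩, hyw⟩ := hyS
  rwa [← Complex.eq_add_of_add_le_re_of_dist_le (by rw [hyc]; exact hwre) hyw]

/-- A Rouché-type principle: `H / (F + H)` equals `1` at a zero of `F`, so by the maximum modulus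
principle it cannot stay below `c < 1` on the frontier unless `F + H` vanishes somewhere. -/
theorem exists_add_eq_zero_of_norm_le_mul_norm_add {F H : ℂ → ℂ} {V : Set ℂ} {c : ℝ} {s : ℂ}
    (hV : IsBounded V) (hF : DiffContOnCl ℂ F V) (hH : DiffContOnCl ℂ H V) (hc : c < 1)
    (hfr : ∀ z ∈ frontier V, ‖H z‖ ≤ c * ‖F z + H z‖) (hs : s ∈ V) (hFs : F s = 0) :
    ∃ z ∈ closure V, F z + H z = 0 := by
  by_contra! hne
  have hφ : DiffContOnCl ℂ (fun z => (F z + H z)⁻¹ • H z) V :=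
    ((hF.add hH).inv hne).smul hH
  have hφs : ‖(F s + H s)⁻¹ • H s‖ = 1 := by
    have hHs : H s ≠ 0 := by simpa [hFs] using hne s (subset_closure hs)
    simp [hFs, hHs]
  have := norm_le_of_forall_mem_frontier_norm_le hV hφ (C := c) (fun z hz => by
    rw [norm_smul, norm_inv, inv_mul_le_iff₀ (norm_pos_iff.2 (hne z (frontier_subset_closure hz)))]
    linarith [hfr z hz]) (subset_closure hs)
  linarith

section Frontier

variable {F : ℂ → ℂ} {η κ c δ : ℝ} {x z : ℂ}

local notation "𝒩" => thickening η (F ⁻¹' {0})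

local notation "𝒱" => connectedComponentIn 𝒩 x

theorem ball_inter_subset_closure_connectedComponentIn
    (hlow : ∀ s : ℂ, c < s.re → s ∉ 𝒩 → κ ≤ ‖F s‖)
    (hV : 𝒱 ⊆ {s | c < s.re}) (hz : z ∈ closure 𝒱)
    (hδ : 0 < δ) (hball : ∀ y ∈ ball z δ, ‖F y‖ < κ) :
    ball z δ ∩ {s | c ≤ s.re} ⊆ closure 𝒱 := by
  have hDN : ball z δ ∩ {s | c < s.re} ⊆ 𝒩 := fun s hs => by
    by_contra hsN
    exact (hball s hs.1).not_ge (hlow s hs.2 hsN)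
  obtain ⟨p, hpball, hpV⟩ := mem_closure_iff.1 hz _ isOpen_ball (mem_ball_self hδ)
  have hDV : ball z δ ∩ {s | c < s.re} ⊆ 𝒱 := by
    have := ((convex_ball z δ).inter (convex_halfSpace_re_gt c)).isPreconnected
      |>.subset_connectedComponentIn ⟨hpball, hV hpV⟩ hDN
    rwa [← connectedComponentIn_eq hpV] at this
  calc ball z δ ∩ {s | c ≤ s.re} = ball z δ ∩ closure {s | c < s.re} := by
        rw [closure_setOfPred_lt_re]
    _ ⊆ closure (ball z δ ∩ {s | c < s.re}) := isOpen_ball.inter_closure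
    _ ⊆ closure 𝒱 := closure_mono hDV

theorem le_norm_of_mem_frontier_connectedComponentIn (hF : Continuous F)
    (hZ : ∀ K, IsCompact K → (K ∩ F ⁻¹' {0}).Finite) (hη : 0 < η)
    (hlow : ∀ s : ℂ, c < s.re → s ∉ 𝒩 → κ ≤ ‖F s‖)
    (hV : 𝒱 ⊆ {s | c < s.re}) (hz : z ∈ frontier 𝒱) : κ ≤ ‖F z‖ := by
  have hzcl := frontier_subset_closure hz
  have hcz : c ≤ z.re := by
    have := closure_mono hV hzcl
    rwa [closure_setOfPred_lt_re] at this
  rcases hcz.lt_or_eq with hcz | hcz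
  · exact hlow z hcz (isOpen_thickening.notMem_of_mem_frontier_connectedComponentIn hz)
  by_contra! hFz
  obtain ⟨δ, hδ, hball⟩ := Metric.eventually_nhds_iff_ball.1
    (hF.norm.continuousAt.eventually_lt continuousAt_const hFz)
  have hsub := ball_inter_subset_closure_connectedComponentIn hlow hV hzcl hδ hball
  -- the `η`-translate of a vertical segment through `z` consists of zeros of `F`
  have hzeros : ball (z + η) δ ∩ {y | y.re = (z + η).re} ⊆ closedBall (z + η) δ ∩ F ⁻¹' {0} := by
    rintro y ⟨hyball, hyre⟩
    refine ⟨ball_subset_closedBall hyball, ?_⟩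
    have hy : y - η ∈ ball z δ ∩ {s | c ≤ s.re} := by
      refine ⟨?_, ?_⟩
      · rw [mem_ball, dist_eq_norm] at hyball ⊢
        convert hyball using 2
        ring
      · simp_all
    simpa using add_mem_of_mem_closure_connectedComponentIn_thickening
      (isClosed_singleton.preimage hF) hη hV (hsub hy) (by simp_all)
  exact (Complex.infinite_ball_inter_re_eq (z + η) hδ).mono hzeros
    (hZ _ (isCompact_closedBall _ _))

theorem exists_add_eq_zero_mem_closure_connectedComponentIn {H : ℂ → ℂ}
    (hF : Differentiable ℂ F) (hZ : ∀ K, IsCompact K → (K ∩ F ⁻¹' {0}).Finite) (hη : 0 < η)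
    (hlow : ∀ s : ℂ, c < s.re → s ∉ 𝒩 → κ ≤ ‖F s‖)
    (hVb : IsBounded 𝒱) (hV : 𝒱 ⊆ {s | c < s.re}) (hH : DiffContOnCl ℂ H 𝒱)
    (hHfr : ∀ z ∈ frontier 𝒱, ‖H z‖ ≤ κ / 3) (hx : F x = 0) :
    ∃ z ∈ closure 𝒱, F z + H z = 0 := by
  refine exists_add_eq_zero_of_norm_le_mul_norm_add hVb hF.diffContOnCl hH (c := 1 / 2)
    (by norm_num) (fun z hz => ?_) (mem_connectedComponentIn (self_subset_thickening hη _ hx)) hx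
  have hFz := le_norm_of_mem_frontier_connectedComponentIn hF.continuous hZ hη hlow hV hz
  have := norm_sub_le (F z + H z) (H z)
  rw [add_sub_cancel_right] at this
  linarith [hHfr z hz]

end Frontier

theorem rouche_perturbation_quasipolynomial_general
    (m : ℕ) (a : Fin (m + 1) → ℂ) (τ : Fin (m + 1) → ℝ) (hτ : ∀ k, τ k > 0)
    (F H : ℂ → ℂ)
    (hF : ∀ s, F s = 1 - ∑ k : Fin (m + 1), a k * Complex.exp (-(τ k : ℂ) * s))
    (U : Set ℂ) (hU : {s : ℂ | 0 ≤ s.re} ⊆ U)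
    (hH : DifferentiableOn ℂ H U)
    (hHdecay : Filter.Tendsto H (Bornology.cobounded ℂ) (nhds 0))
    (σ : ℝ) (hσ : σ > 0)
    (hinf : {s : ℂ | F s = 0 ∧ σ < s.re}.Infinite)
    (η κ : ℝ) (hη : η > 0) (hκ : κ > 0)
    (Zη : Set ℂ) (hZη : Zη = {z : ℂ | ∃ s : ℂ, F s = 0 ∧ dist z s < η})
    (hcomp : ∀ z ∈ Zη, σ < z.re →
      Bornology.IsBounded (connectedComponentIn Zη z) ∧
        connectedComponentIn Zη z ⊆ {s : ℂ | σ / 2 < s.re})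
    (hlow : ∀ s : ℂ, σ / 2 < s.re → s ∉ Zη → κ ≤ ‖F s‖) :
    {s : ℂ | F s + H s = 0 ∧ 0 < s.re}.Infinite := by
  have hFd : Differentiable ℂ F := by rw [funext hF]; fun_prop
  have hZ : ∀ K, IsCompact K → (K ∩ F ⁻¹' {0}).Finite := by
    obtain ⟨t, ht⟩ := ((tendsto_one_sub_sum_exp_atTop a τ hτ).eventually_ne one_ne_zero).exists
    exact fun K hK => hFd.finite_inter_preimage_zero ⟨t, by rwa [hF]⟩ hK
  obtain rfl : Zη = thickening η (F ⁻¹' {0}) := hZη.trans (by ext; simp [mem_thickening_iff])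
  intro hfin
  -- outside a large ball, `‖H‖ ≤ κ / 3` and `F + H` has no zero in the right half-plane
  obtain ⟨R, hR⟩ := ((isBounded_compl_iff.2 (hHdecay.eventually
    (closedBall_mem_nhds 0 (by positivity : 0 < κ / 3)))).union hfin.isBounded).subset_ball 0
  have hR' : ∀ z ∉ ball 0 R, ‖H z‖ ≤ κ / 3 ∧ ¬(F z + H z = 0 ∧ 0 < z.re) := fun z hz => by
    simpa using hR.mt hz
  by_cases hfar : ∃ s₀, F s₀ = 0 ∧ σ < s₀.re ∧
      Disjoint (connectedComponentIn (thickening η (F ⁻¹' {0})) s₀) (ball 0 R)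
  · obtain ⟨s₀, hs₀, hσs₀, hdisj⟩ := hfar
    obtain ⟨hVb, hV⟩ := hcomp s₀ (self_subset_thickening hη _ hs₀) hσs₀
    have hcl : ∀ z ∈ closure (connectedComponentIn (thickening η (F ⁻¹' {0})) s₀),
        σ / 2 ≤ z.re ∧ z ∉ ball 0 R := fun z hz =>
      ⟨by simpa [closure_setOfPred_lt_re] using closure_mono hV hz,
        (hdisj.closure_left isOpen_ball).notMem_of_mem_left hz⟩
    have hHd : DiffContOnCl ℂ H (connectedComponentIn (thickening η (F ⁻¹' {0})) s₀) :=
      (hH.mono fun z hz => hU (show 0 ≤ z.re by linarith [(hcl z hz).1])).diffContOnCl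
    obtain ⟨z, hz, hFHz⟩ := exists_add_eq_zero_mem_closure_connectedComponentIn hFd hZ hη hlow hVb
      hV hHd (fun z hz => (hR' z (hcl z (frontier_subset_closure hz)).2).1) hs₀
    exact (hR' z (hcl z hz).2).2 ⟨hFHz, by linarith [(hcl z hz).1]⟩
  · push Not at hfar
    have hW := isBounded_of_connectedComponentIn_thickening_inter_nonempty hZ isBounded_ball
      (W := {s | F s = 0 ∧ σ < s.re}) fun s ⟨hs, hσs⟩ =>
        ⟨self_subset_thickening hη _ hs, (hcomp s (self_subset_thickening hη _ hs) hσs).1,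
          not_disjoint_iff_nonempty_inter.1 (hfar s hs hσs)⟩
    exact hinf ((hZ _ hW.isCompact_closure).subset fun s hs => ⟨subset_closure hs, hs.1⟩)

theorem rouche_perturbation_quasipolynomial
    (m : ℕ) (a : Fin (m + 1) → ℂ) (τ : Fin (m + 1) → ℝ) (hτ : ∀ k, τ k > 0)
    (F H : ℂ → ℂ)
    (hF : ∀ s, F s = 1 - ∑ k : Fin (m + 1), a k * Complex.exp (-(τ k : ℂ) * s))
    (U : Set ℂ) (hUopen : IsOpen U) (hU : {s : ℂ | 0 ≤ s.re} ⊆ U)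
    (hH : DifferentiableOn ℂ H U)
    (hHdecay : Filter.Tendsto H (Bornology.cobounded ℂ) (nhds 0))
    (σ : ℝ) (hσ : σ > 0)
    (hinf : {s : ℂ | F s = 0 ∧ σ < s.re}.Infinite)
    (η κ : ℝ) (hη : η > 0) (hκ : κ > 0)
    (Zη : Set ℂ) (hZη : Zη = {z : ℂ | ∃ s : ℂ, F s = 0 ∧ dist z s < η})
    (hcomp : ∀ z ∈ Zη, σ < z.re →
      Bornology.IsBounded (connectedComponentIn Zη z) ∧
        connectedComponentIn Zη z ⊆ {s : ℂ | σ / 2 < s.re})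
    (hlow : ∀ s : ℂ, σ / 2 < s.re → s ∉ Zη → κ ≤ ‖F s‖) :
    {s : ℂ | F s + H s = 0 ∧ 0 < s.re}.Infinite :=
  rouche_perturbation_quasipolynomial_general m a τ hτ F H hF U hU hH hHdecay σ hσ hinf η κ hη hκ Zη
    hZη hcomp hlow
end
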